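/- arXiv:1508.00192 — 5 statements merged into one kernel-verified Lean document; each statement's English description precedes it below -/
import Mathlib

section
/- For every ε > 0, every Δ > 0, all real numbers μ₁, μ₂ with |μ₁ − μ₂| ≤ Δ, and every z ∈ ℝ, the Laplace output densities at z satisfy (1/(2b))·exp(−|z − μ₁|/b) ≤ exp(ε) · (1/(2b))·exp(−|z − μ₂|/b), where b = Δ/ε. (This is the pointwise density-ratio bound showing that the Laplace mechanism with noise scale Δ/ε satisfies ε-differential privacy when the query has sensitivity Δ.) -/
/-! Moving the centre of a Laplace density by `d` changes `-|z - μ| / b` by at most `d / b`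
(triangle inequality), so the two densities differ by a factor at most `exp (d / b)`.
With `b = Δ / ε` and `d ≤ Δ` that factor is at most `exp ε`. -/

open Real

noncomputable def laplaceDensity (b μ z : ℝ) : ℝ :=
  1 / (2 * b) * exp (-|z - μ| / b)

lemma laplaceDensity_nonneg {b : ℝ} (hb : 0 ≤ b) (μ z : ℝ) : 0 ≤ laplaceDensity b μ z := by
  unfold laplaceDensity
  positivity

lemma laplaceDensity_le_exp_mul {b : ℝ} (hb : 0 ≤ b) (μ₁ μ₂ z : ℝ) :
    laplaceDensity b μ₁ z ≤ exp (|μ₁ - μ₂| / b) * laplaceDensity b μ₂ z := by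
  have htriangle : |z - μ₂| - |z - μ₁| ≤ |μ₁ - μ₂| := by
    simpa using abs_sub_abs_le_abs_sub (z - μ₂) (z - μ₁)
  have hexponent : -|z - μ₁| / b ≤ |μ₁ - μ₂| / b + -|z - μ₂| / b := by
    have := div_le_div_of_nonneg_right htriangle hb
    rw [sub_div] at this
    rw [neg_div, neg_div]
    linarith
  unfold laplaceDensity
  rw [mul_left_comm, ← exp_add]
  gcongr

theorem laplace_mechanism_density_ratio_general
    (ε Δ μ₁ μ₂ z : ℝ) (hε : 0 < ε) (hsens : |μ₁ - μ₂| ≤ Δ) :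
    (1 / (2 * (Δ / ε))) * Real.exp (-|z - μ₁| / (Δ / ε)) ≤
      Real.exp ε * ((1 / (2 * (Δ / ε))) * Real.exp (-|z - μ₂| / (Δ / ε))) := by
  have hb : 0 ≤ Δ / ε := div_nonneg ((abs_nonneg _).trans hsens) hε.le
  have hshift : |μ₁ - μ₂| / (Δ / ε) ≤ ε :=
    div_le_of_le_mul₀ hb hε.le (by rwa [mul_div_cancel₀ Δ hε.ne'])
  calc laplaceDensity (Δ / ε) μ₁ z
      ≤ exp (|μ₁ - μ₂| / (Δ / ε)) * laplaceDensity (Δ / ε) μ₂ z :=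
        laplaceDensity_le_exp_mul hb μ₁ μ₂ z
    _ ≤ exp ε * laplaceDensity (Δ / ε) μ₂ z := by
        gcongr
        exact laplaceDensity_nonneg hb μ₂ z

/-- Pointwise density-ratio bound for the Laplace mechanism: with noise scale
`b = Δ/ε`, the Laplace densities centered at `μ₁` and `μ₂` (with `|μ₁ - μ₂| ≤ Δ`)
differ pointwise by at most a factor `exp ε`. -/
theorem laplace_mechanism_density_ratio
    (ε Δ μ₁ μ₂ z : ℝ) (hε : 0 < ε) (hΔ : 0 < Δ) (hsens : |μ₁ - μ₂| ≤ Δ) :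
    (1 / (2 * (Δ / ε))) * Real.exp (-|z - μ₁| / (Δ / ε)) ≤
      Real.exp ε * ((1 / (2 * (Δ / ε))) * Real.exp (-|z - μ₂| / (Δ / ε))) :=
  laplace_mechanism_density_ratio_general ε Δ μ₁ μ₂ z hε hsens
end

section
/- Let R be a nonempty finite type, let S > 0 and ε ≥ 0, and let q₁, q₂ : R → ℝ satisfy |q₁(r) − q₂(r)| ≤ S for all r ∈ R. For j ∈ {1,2} define the probability mass function p_j(r) = exp(ε·q_j(r)/(2S)) / Σ_{r′∈R} exp(ε·q_j(r′)/(2S)). Then for every r ∈ R, p₁(r) ≤ exp(ε) · p₂(r). (This is the density-ratio bound showing that the Exponential mechanism with quality function of sensitivity S satisfies ε-differential privacy.) -/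
/-!
Each weight `exp (ε q r / (2S))` changes by a factor of at most `exp (ε/2)` when `q` moves by at
most `S`. The numerator of the probability can therefore grow by `exp (ε/2)` and the normalising
sum shrink by at most the same factor, giving the ratio `exp (ε/2) ^ 2 = exp ε`.
-/

theorem div_sum_le_sq_mul_div_sum {ι : Type*} [Fintype ι] {f g : ι → ℝ} {c : ℝ}
    (hf : ∀ i, 0 < f i) (hg : ∀ i, 0 < g i)
    (hfg : ∀ i, f i ≤ c * g i) (hgf : ∀ i, g i ≤ c * f i) (r : ι) :
    f r / ∑ i, f i ≤ c ^ 2 * (g r / ∑ i, g i) := by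
  have hne : (Finset.univ : Finset ι).Nonempty := ⟨r, Finset.mem_univ r⟩
  have hF : 0 < ∑ i, f i := Finset.sum_pos (fun i _ => hf i) hne
  have hG : 0 < ∑ i, g i := Finset.sum_pos (fun i _ => hg i) hne
  have hc : 0 < c := pos_of_mul_pos_left ((hg r).trans_le (hgf r)) (hf r).le
  have hsum : ∑ i, g i ≤ c * ∑ i, f i := by
    rw [Finset.mul_sum]
    exact Finset.sum_le_sum fun i _ => hgf i
  calc f r / ∑ i, f i
      ≤ c * g r / ∑ i, f i := by gcongr; exact hfg r
    _ = c ^ 2 * g r / (c * ∑ i, f i) := by field_simp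
    _ ≤ c ^ 2 * g r / ∑ i, g i := by gcongr; exact mul_nonneg (sq_nonneg c) (hg r).le
    _ = c ^ 2 * (g r / ∑ i, g i) := mul_div_assoc _ _ _

theorem exp_mul_div_le_exp_half_mul_exp {S ε a b : ℝ} (hS : 0 < S) (hε : 0 ≤ ε)
    (hab : a - b ≤ S) :
    Real.exp (ε * a / (2 * S)) ≤ Real.exp (ε / 2) * Real.exp (ε * b / (2 * S)) := by
  rw [← Real.exp_add, Real.exp_le_exp, div_add_div _ _ two_ne_zero (by positivity),
    div_le_div_iff₀ (by positivity) (by positivity)]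
  nlinarith [mul_le_mul_of_nonneg_left hab hε]

open Finset in
theorem exponential_mechanism_density_ratio_general
    {R : Type*} [Fintype R]
    (S ε : ℝ) (hS : 0 < S) (hε : 0 ≤ ε)
    (q₁ q₂ : R → ℝ) (hq : ∀ r : R, |q₁ r - q₂ r| ≤ S) (r : R) :
    Real.exp (ε * q₁ r / (2 * S)) / (∑ r' : R, Real.exp (ε * q₁ r' / (2 * S))) ≤
      Real.exp ε *
        (Real.exp (ε * q₂ r / (2 * S)) / (∑ r' : R, Real.exp (ε * q₂ r' / (2 * S)))) := by
  have hexp : Real.exp ε = Real.exp (ε / 2) ^ 2 := by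
    rw [sq, ← Real.exp_add, add_halves]
  rw [hexp]
  refine div_sum_le_sq_mul_div_sum (fun _ => Real.exp_pos _) (fun _ => Real.exp_pos _)
    (fun i => exp_mul_div_le_exp_half_mul_exp hS hε (abs_le.mp (hq i)).2)
    (fun i => exp_mul_div_le_exp_half_mul_exp hS hε
      (abs_le.mp ((abs_sub_comm _ _).trans_le (hq i))).2) r

open Finset in
/-- Density-ratio bound for the Exponential mechanism: if the quality functions
`q₁, q₂` differ pointwise by at most the sensitivity `S`, then the corresponding
exponential-mechanism output probabilities differ by at most a factor `exp ε`. -/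
theorem exponential_mechanism_density_ratio
    {R : Type*} [Fintype R] [Nonempty R]
    (S ε : ℝ) (hS : 0 < S) (hε : 0 ≤ ε)
    (q₁ q₂ : R → ℝ) (hq : ∀ r : R, |q₁ r - q₂ r| ≤ S) (r : R) :
    Real.exp (ε * q₁ r / (2 * S)) / (∑ r' : R, Real.exp (ε * q₁ r' / (2 * S))) ≤
      Real.exp ε *
        (Real.exp (ε * q₂ r / (2 * S)) / (∑ r' : R, Real.exp (ε * q₂ r' / (2 * S)))) :=
  exponential_mechanism_density_ratio_general S ε hS hε q₁ q₂ hq r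
end

section
/- Let α and β be types, ε₁, ε₂ ≥ 0, let p₁, p₂ be probability mass functions on α with p₁(a) ≤ exp(ε₁)·p₂(a) for every a ∈ α, and let k₁, k₂ : α → PMF β satisfy k₁(a)(b) ≤ exp(ε₂)·k₂(a)(b) for every a ∈ α and b ∈ β. Then for every b ∈ β, (p₁ bind k₁)(b) ≤ exp(ε₁ + ε₂) · (p₂ bind k₂)(b). (Sequential composition: running an ε₁-differentially private mechanism followed by an ε₂-differentially private mechanism yields an (ε₁+ε₂)-differentially private mechanism.) -/
open scoped ENNReal

theorem PMF.bind_apply_le_mul_of_le {α β : Type*} {p₁ p₂ : PMF α} {k₁ k₂ : α → PMF β}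
    {c d : ℝ≥0∞} {b : β} (hp : ∀ a, p₁ a ≤ c * p₂ a) (hk : ∀ a, k₁ a b ≤ d * k₂ a b) :
    p₁.bind k₁ b ≤ c * d * p₂.bind k₂ b := by
  simp only [PMF.bind_apply, ← ENNReal.tsum_mul_left]
  refine ENNReal.tsum_le_tsum fun a => ?_
  calc p₁ a * k₁ a b ≤ (c * p₂ a) * (d * k₂ a b) := mul_le_mul' (hp a) (hk a)
    _ = c * d * (p₂ a * k₂ a b) := by ring

theorem sequential_composition_general
    {α β : Type*} (ε₁ ε₂ : ℝ)
    (p₁ p₂ : PMF α) (k₁ k₂ : α → PMF β)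
    (hp : ∀ a : α, p₁ a ≤ ENNReal.ofReal (Real.exp ε₁) * p₂ a)
    (hk : ∀ (a : α) (b : β), k₁ a b ≤ ENNReal.ofReal (Real.exp ε₂) * k₂ a b)
    (b : β) :
    (p₁.bind k₁) b ≤ ENNReal.ofReal (Real.exp (ε₁ + ε₂)) * (p₂.bind k₂) b := by
  rw [Real.exp_add, ENNReal.ofReal_mul (Real.exp_pos ε₁).le]
  exact PMF.bind_apply_le_mul_of_le hp (fun a => hk a b)

/-- Sequential composition of differential privacy: if `p₁, p₂` satisfy a pointwise
`exp ε₁` ratio bound and the kernels `k₁, k₂` satisfy a pointwise `exp ε₂` ratio bound,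
then the composed mechanisms satisfy an `exp (ε₁ + ε₂)` ratio bound. -/
theorem sequential_composition
    {α β : Type*} (ε₁ ε₂ : ℝ) (hε₁ : 0 ≤ ε₁) (hε₂ : 0 ≤ ε₂)
    (p₁ p₂ : PMF α) (k₁ k₂ : α → PMF β)
    (hp : ∀ a : α, p₁ a ≤ ENNReal.ofReal (Real.exp ε₁) * p₂ a)
    (hk : ∀ (a : α) (b : β), k₁ a b ≤ ENNReal.ofReal (Real.exp ε₂) * k₂ a b)
    (b : β) :
    (p₁.bind k₁) b ≤ ENNReal.ofReal (Real.exp (ε₁ + ε₂)) * (p₂.bind k₂) b :=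
  sequential_composition_general ε₁ ε₂ p₁ p₂ k₁ k₂ hp hk b
end

section
/- Let ι be a finite index set, α a type, ε ≥ 0, and let p₁, p₂ : ι → PMF α be families of probability mass functions such that there exists j₀ ∈ ι with p₁(j) = p₂(j) for all j ≠ j₀ and p₁(j₀)(x) ≤ exp(ε)·p₂(j₀)(x) for all x ∈ α. Then for every function x : ι → α, ∏_{j∈ι} p₁(j)(x(j)) ≤ exp(ε) · ∏_{j∈ι} p₂(j)(x(j)). (Parallel composition: independent ε-differentially private mechanisms applied to disjoint parts of the data, where a neighboring database changes only one part, together satisfy ε-differential privacy.) -/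
theorem Finset.prod_le_mul_prod_of_eq_off {ι M : Type*} [CommMonoid M] [Preorder M]
    [MulRightMono M] {s : Finset ι} {f g : ι → M} {c : M} {j₀ : ι} (hj₀s : j₀ ∈ s)
    (hoff : ∀ j ∈ s, j ≠ j₀ → f j = g j) (hj₀ : f j₀ ≤ c * g j₀) :
    ∏ j ∈ s, f j ≤ c * ∏ j ∈ s, g j := by
  classical
  have hrest : ∏ j ∈ s.erase j₀, f j = ∏ j ∈ s.erase j₀, g j :=
    Finset.prod_congr rfl fun j hj => hoff j (Finset.mem_of_mem_erase hj) (Finset.ne_of_mem_erase hj)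
  rw [← Finset.mul_prod_erase s f hj₀s, ← Finset.mul_prod_erase s g hj₀s, hrest, ← mul_assoc]
  exact mul_le_mul_left hj₀ _

theorem parallel_composition_general
    {ι α : Type*} [Fintype ι] (ε : ℝ)
    (p₁ p₂ : ι → PMF α)
    (h : ∃ j₀ : ι, (∀ j : ι, j ≠ j₀ → p₁ j = p₂ j) ∧
      (∀ x : α, p₁ j₀ x ≤ ENNReal.ofReal (Real.exp ε) * p₂ j₀ x))
    (x : ι → α) :
    ∏ j : ι, p₁ j (x j) ≤ ENNReal.ofReal (Real.exp ε) * ∏ j : ι, p₂ j (x j) := by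
  obtain ⟨j₀, hagree, hbound⟩ := h
  exact Finset.prod_le_mul_prod_of_eq_off (Finset.mem_univ j₀)
    (fun j _ hj => by rw [hagree j hj]) (hbound (x j₀))

/-- Parallel composition of differential privacy: if the families of mechanisms
`p₁, p₂` agree on all indices except one index `j₀`, where they satisfy a pointwise
`exp ε` ratio bound, then the product of the output probabilities satisfies an
`exp ε` ratio bound. -/
theorem parallel_composition
    {ι α : Type*} [Fintype ι] (ε : ℝ) (hε : 0 ≤ ε)
    (p₁ p₂ : ι → PMF α)
    (h : ∃ j₀ : ι, (∀ j : ι, j ≠ j₀ → p₁ j = p₂ j) ∧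
      (∀ x : α, p₁ j₀ x ≤ ENNReal.ofReal (Real.exp ε) * p₂ j₀ x))
    (x : ι → α) :
    ∏ j : ι, p₁ j (x j) ≤ ENNReal.ofReal (Real.exp ε) * ∏ j : ι, p₂ j (x j) :=
  parallel_composition_general ε p₁ p₂ h x
end

section
/- Let m ≥ 1, let ℓ : Fin m → ℝ satisfy ℓ(i) > 0 for all i, let k ∈ Fin m, and let ε > 0. Define weights w(i) = ℓ(i)·exp(−(ε/2)·|i − k|) and let I be a random index chosen with probability ℙ(I = i) = w(i)/Σ_j w(j). Then for every natural number η: (1) ℙ(k − I > η) ≤ (Σ_{i : k − i > η} ℓ(i)) · exp(−(ε/2)(η+1)) / ℓ(k), and (2) ℙ(I − k > η) ≤ (Σ_{i : i − k > η} ℓ(i)) · exp(−(ε/2)(η+1)) / ℓ(k). -/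
/-!
Ranks are integers, so a rank deviating from `k` by more than `η` deviates by at least `η + 1`;
its weight is then at most `ℓ i * exp (-(ε/2)(η+1))`, while the normaliser is at least the
weight `ℓ k` of the rank `k` itself.
-/

open Finset

lemma add_one_le_abs_sub_of_lt_sub {a b n : ℕ} (h : (n : ℝ) < a - b) :
    (n : ℝ) + 1 ≤ |(a : ℝ) - b| := by
  have hint : (n : ℤ) + 1 ≤ (a : ℤ) - b := by
    rw [Int.add_one_le_iff]
    exact_mod_cast h
  rw [abs_of_nonneg (by linarith)]
  exact_mod_cast hint

section ExponentialWeights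

variable {ι : Type*} {ℓ d : ι → ℝ} {a t : ℝ}

lemma sum_mul_exp_neg_le_of_le {S : Finset ι} (hℓ : ∀ i ∈ S, 0 ≤ ℓ i) (ha : 0 ≤ a)
    (hS : ∀ i ∈ S, t ≤ d i) :
    ∑ i ∈ S, ℓ i * Real.exp (-a * d i) ≤ (∑ i ∈ S, ℓ i) * Real.exp (-a * t) := by
  rw [sum_mul]
  refine sum_le_sum fun i hi => mul_le_mul_of_nonneg_left ?_ (hℓ i hi)
  exact Real.exp_le_exp.mpr (by nlinarith [hS i hi])

lemma le_sum_mul_exp_neg [Fintype ι] (hℓ : ∀ i, 0 ≤ ℓ i) {k : ι} (hdk : d k = 0) :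
    ℓ k ≤ ∑ j, ℓ j * Real.exp (-a * d j) := by
  calc ℓ k = ℓ k * Real.exp (-a * d k) := by simp [hdk]
    _ ≤ ∑ j, ℓ j * Real.exp (-a * d j) :=
      single_le_sum (f := fun j => ℓ j * Real.exp (-a * d j))
        (fun j _ => mul_nonneg (hℓ j) (Real.exp_pos _).le) (mem_univ k)

lemma tail_mass_le [Fintype ι] (hℓ : ∀ i, 0 ≤ ℓ i) {k : ι} (hk : 0 < ℓ k) (hdk : d k = 0)
    (ha : 0 ≤ a) {S : Finset ι} (hS : ∀ i ∈ S, t ≤ d i) :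
    (∑ i ∈ S, ℓ i * Real.exp (-a * d i)) / ∑ j, ℓ j * Real.exp (-a * d j) ≤
      (∑ i ∈ S, ℓ i) * Real.exp (-a * t) / ℓ k := by
  have hnum := sum_mul_exp_neg_le_of_le (fun i _ => hℓ i) ha hS
  have hnum_nonneg : 0 ≤ ∑ i ∈ S, ℓ i * Real.exp (-a * d i) :=
    sum_nonneg fun i _ => mul_nonneg (hℓ i) (Real.exp_pos _).le
  exact div_le_div₀ (hnum_nonneg.trans hnum) hnum hk (le_sum_mul_exp_neg hℓ hdk)

end ExponentialWeights

theorem exponential_mechanism_rank_tails_general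
    (m : ℕ) (ℓ : Fin m → ℝ) (hℓ : ∀ i, 0 < ℓ i)
    (k : Fin m) (ε : ℝ) (hε : 0 < ε)
    (w : Fin m → ℝ)
    (hw : ∀ i, w i = ℓ i * Real.exp (-(ε / 2) * |(i : ℝ) - (k : ℝ)|))
    (η : ℕ) :
    ((∑ i ∈ univ.filter (fun i : Fin m => (k : ℝ) - (i : ℝ) > η), w i) / (∑ j, w j) ≤
        (∑ i ∈ univ.filter (fun i : Fin m => (k : ℝ) - (i : ℝ) > η), ℓ i) *
          Real.exp (-(ε / 2) * (η + 1)) / ℓ k) ∧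
      ((∑ i ∈ univ.filter (fun i : Fin m => (i : ℝ) - (k : ℝ) > η), w i) / (∑ j, w j) ≤
        (∑ i ∈ univ.filter (fun i : Fin m => (i : ℝ) - (k : ℝ) > η), ℓ i) *
          Real.exp (-(ε / 2) * (η + 1)) / ℓ k) := by
  simp only [hw]
  have tail {S : Finset (Fin m)} (hS : ∀ i ∈ S, (η : ℝ) + 1 ≤ |(i : ℝ) - (k : ℝ)|) :=
    tail_mass_le (ℓ := ℓ) (d := fun i => |(i : ℝ) - (k : ℝ)|) (a := ε / 2) (fun i => (hℓ i).le)
      (hℓ k) (by simp) (by linarith) hS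
  refine ⟨tail fun i hi => ?_, tail fun i hi => ?_⟩
  · rw [abs_sub_comm]
    exact add_one_le_abs_sub_of_lt_sub (mem_filter.mp hi).2
  · exact add_one_le_abs_sub_of_lt_sub (mem_filter.mp hi).2

/-- Tail bounds for the Exponential mechanism selecting a noisy rank: if index `i` is
chosen with probability proportional to `ℓ i · exp (-(ε/2)·|i - k|)`, then the
probability that the chosen rank deviates from `k` by more than `η` (in either
direction) is bounded by the corresponding tail sum of lengths times
`exp (-(ε/2)(η+1)) / ℓ k`. -/
theorem exponential_mechanism_rank_tails
    (m : ℕ) (hm : 1 ≤ m) (ℓ : Fin m → ℝ) (hℓ : ∀ i, 0 < ℓ i)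
    (k : Fin m) (ε : ℝ) (hε : 0 < ε)
    (w : Fin m → ℝ)
    (hw : ∀ i, w i = ℓ i * Real.exp (-(ε / 2) * |(i : ℝ) - (k : ℝ)|))
    (η : ℕ) :
    ((∑ i ∈ univ.filter (fun i : Fin m => (k : ℝ) - (i : ℝ) > η), w i) / (∑ j, w j) ≤
        (∑ i ∈ univ.filter (fun i : Fin m => (k : ℝ) - (i : ℝ) > η), ℓ i) *
          Real.exp (-(ε / 2) * (η + 1)) / ℓ k) ∧
      ((∑ i ∈ univ.filter (fun i : Fin m => (i : ℝ) - (k : ℝ) > η), w i) / (∑ j, w j) ≤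
        (∑ i ∈ univ.filter (fun i : Fin m => (i : ℝ) - (k : ℝ) > η), ℓ i) *
          Real.exp (-(ε / 2) * (η + 1)) / ℓ k) :=
  exponential_mechanism_rank_tails_general m ℓ hℓ k ε hε w hw η
end
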